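/- arXiv:1508.03835 — 4 statements merged into one kernel-verified Lean document; each statement's English description precedes it below -/
import Mathlib

section
/- Every distance mean-regular graph is distance degree-regular: for each i = 0,…,D, the number k_i(u) = |Γ_i(u)| of vertices at distance i from u is the same for all vertices u. -/
open Finset

attribute [local instance] Classical.propDecidable

variable {V : Type*}

/-- The set of vertices at distance `i` from `u`. -/
noncomputable def SimpleGraph.distSphere [Fintype V] (G : SimpleGraph V) (u : V) (i : ℕ) :
    Finset V :=
  Finset.univ.filter fun v => G.dist u v = i

/-- The averaged intersection number `p̄_{ij}^h(u)`:
the average over `v ∈ Γ_h(u)` of `|Γ_i(u) ∩ Γ_j(v)|`. -/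
noncomputable def SimpleGraph.pbar [Fintype V] (G : SimpleGraph V) (u : V) (h i j : ℕ) : ℚ :=
  (∑ v ∈ G.distSphere u h, ((G.distSphere u i ∩ G.distSphere v j).card : ℚ)) /
    ((G.distSphere u h).card : ℚ)

/-- `Γ` is distance mean-regular (with diameter `D`) if all the averaged intersection
numbers `p̄_{ij}^h(u)` for `h,i,j ≤ D` are independent of the vertex `u`. -/
def SimpleGraph.DMR [Fintype V] (G : SimpleGraph V) (D : ℕ) : Prop :=
  ∀ h i j : ℕ, h ≤ D → i ≤ D → j ≤ D → ∀ u u' : V, G.pbar u h i j = G.pbar u' h i j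

/-- `ā_h(u) = p̄_{1h}^h(u)`: average over `v ∈ Γ_h(u)` of `|Γ_h(u) ∩ Γ_1(v)|`. -/
noncomputable def SimpleGraph.abar [Fintype V] (G : SimpleGraph V) (u : V) (h : ℕ) : ℚ :=
  G.pbar u h h 1

/-- `b̄_h(u) = p̄_{1,h+1}^h(u)`: average over `v ∈ Γ_h(u)` of `|Γ_{h+1}(u) ∩ Γ_1(v)|`. -/
noncomputable def SimpleGraph.bbar [Fintype V] (G : SimpleGraph V) (u : V) (h : ℕ) : ℚ :=
  G.pbar u h (h + 1) 1

/-- `c̄_h(u) = p̄_{1,h-1}^h(u)`: average over `v ∈ Γ_h(u)` of `|Γ_{h-1}(u) ∩ Γ_1(v)|`.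
(For `h = 0` this value is `0`, matching the convention `c̄₀ = 0`.) -/
noncomputable def SimpleGraph.cbar [Fintype V] (G : SimpleGraph V) (u : V) (h : ℕ) : ℚ :=
  G.pbar u h (h - 1) 1

section Aux

variable [Fintype V] (G : SimpleGraph V)

lemma mem_distSphere {u v : V} {i : ℕ} : v ∈ G.distSphere u i ↔ G.dist u v = i := by
  simp [SimpleGraph.distSphere]

lemma aux_getVert_dist_le (hc : G.Connected) {u v : V} (p : G.Walk u v) (i : ℕ) :
    G.dist u (p.getVert i) ≤ i := by
  induction i with
  | zero => simp [p.getVert_zero]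
  | succ i ih =>
    by_cases h : i < p.length
    · have hadj := p.adj_getVert_succ h
      have h1 : G.dist (p.getVert i) (p.getVert (i + 1)) = 1 :=
        SimpleGraph.dist_eq_one_iff_adj.mpr hadj
      have := hc.dist_triangle (u := u) (v := p.getVert i) (w := p.getVert (i + 1))
      omega
    · rw [p.getVert_of_length_le (by omega)]
      rw [p.getVert_of_length_le (by omega)] at ih
      omega

/-- On a geodesic from `u` to `v` there is a vertex at each intermediate distance. -/
lemma exists_on_geodesic (hc : G.Connected) {u v : V} {n : ℕ} (hn : G.dist u v = n)
    {i : ℕ} (hi : i ≤ n) : ∃ w : V, G.dist u w = i ∧ G.dist w v = n - i := by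
  obtain ⟨p, hp⟩ := (hc u v).exists_walk_length_eq_dist
  rw [hn] at hp
  refine ⟨p.getVert i, ?_⟩
  have h1 : G.dist u (p.getVert i) ≤ i := aux_getVert_dist_le G hc p i
  have h2 : G.dist (p.getVert i) v ≤ n - i := by
    have h3 := aux_getVert_dist_le G hc p.reverse (n - i)
    rw [p.getVert_reverse] at h3
    have h4 : n - (n - i) = i := by omega
    rw [hp, h4] at h3
    rwa [SimpleGraph.dist_comm]
  have h5 := hc.dist_triangle (u := u) (v := p.getVert i) (w := v)
  omega

lemma distSphere_nonempty_of (hc : G.Connected) {x y : V} {D : ℕ} (hxy : G.dist x y = D)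
    {i : ℕ} (hi : i ≤ D) : (G.distSphere x i).Nonempty := by
  obtain ⟨w, hw, -⟩ := exists_on_geodesic G hc hxy hi
  exact ⟨w, (mem_distSphere G).mpr hw⟩

lemma inter_sphere_one_eq_filter (A : Finset V) (v : V) :
    A ∩ G.distSphere v 1 = A.filter (fun w => G.Adj v w) := by
  ext w
  simp [mem_distSphere, SimpleGraph.dist_eq_one_iff_adj, Finset.mem_filter, and_comm]

/-- Double counting of edges between two spheres around `u`. -/
lemma sum_inter_comm (u : V) (h i : ℕ) :
    ∑ v ∈ G.distSphere u h, (G.distSphere u i ∩ G.distSphere v 1).card =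
      ∑ w ∈ G.distSphere u i, (G.distSphere u h ∩ G.distSphere w 1).card := by
  have key : ∀ (A B : Finset V),
      ∑ v ∈ A, (B ∩ G.distSphere v 1).card = ∑ w ∈ B, (A ∩ G.distSphere w 1).card := by
    intro A B
    have h1 : ∀ (C : Finset V) (v : V),
        (C ∩ G.distSphere v 1).card = ∑ w ∈ C, if G.Adj v w then 1 else 0 := by
      intro C v
      rw [inter_sphere_one_eq_filter]
      exact Finset.card_filter _ _
    simp only [h1]
    rw [Finset.sum_comm]
    congr 1
    ext w
    congr 1
    ext v
    simp [G.adj_comm]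
  exact key _ _

/-- Each vertex at distance `i+1` from `u` has a neighbor at distance `i` from `u`. -/
lemma inter_sphere_nonempty (hc : G.Connected) {u v : V} {i : ℕ}
    (hv : G.dist u v = i + 1) : (G.distSphere u i ∩ G.distSphere v 1).Nonempty := by
  obtain ⟨w, hw1, hw2⟩ := exists_on_geodesic G hc hv (Nat.le_succ i)
  refine ⟨w, Finset.mem_inter.mpr ⟨(mem_distSphere G).mpr hw1, (mem_distSphere G).mpr ?_⟩⟩
  rw [SimpleGraph.dist_comm]
  simpa using hw2

lemma pbar_pos (hc : G.Connected) {u : V} {i : ℕ}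
    (hne : (G.distSphere u (i + 1)).Nonempty) : 0 < G.pbar u (i + 1) i 1 := by
  unfold SimpleGraph.pbar
  apply div_pos
  · apply Finset.sum_pos
    · intro v hv
      have := inter_sphere_nonempty G hc ((mem_distSphere G).mp hv)
      exact_mod_cast Finset.card_pos.mpr this
    · exact hne
  · exact_mod_cast Finset.card_pos.mpr hne

/-- The key identity `k_{h+1} c̄_{h+1} = k_h b̄_h`. -/
lemma key_identity (u : V) (h : ℕ) (hne : (G.distSphere u h).Nonempty)
    (hne' : (G.distSphere u (h + 1)).Nonempty) :
    ((G.distSphere u (h + 1)).card : ℚ) * G.pbar u (h + 1) h 1 =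
      ((G.distSphere u h).card : ℚ) * G.pbar u h (h + 1) 1 := by
  unfold SimpleGraph.pbar
  have hk : ((G.distSphere u h).card : ℚ) ≠ 0 := by
    exact_mod_cast (Finset.card_pos.mpr hne).ne'
  have hk' : ((G.distSphere u (h + 1)).card : ℚ) ≠ 0 := by
    exact_mod_cast (Finset.card_pos.mpr hne').ne'
  have hrw : ∀ c s : ℚ, c ≠ 0 → c * (s / c) = s := by
    intro c s hc; field_simp
  rw [hrw _ _ hk', hrw _ _ hk]
  exact_mod_cast sum_inter_comm G u (h + 1) h

end Aux

/-- Every distance mean-regular graph is distance degree-regular: for each `i = 0,…,D`,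
the number `k_i(u) = |Γ_i(u)|` is the same for all vertices `u`. -/
theorem stmt3 [Fintype V] (G : SimpleGraph V) (hconn : G.Connected) (D : ℕ)
    (hd : ∀ x y : V, G.dist x y ≤ D) (hd' : ∃ x y : V, G.dist x y = D)
    (hdmr : G.DMR D) :
    ∀ i : ℕ, i ≤ D → ∀ u u' : V,
      (G.distSphere u i).card = (G.distSphere u' i).card := by
  obtain ⟨x, y, hxy⟩ := hd'
  -- step 1: all spheres of radius `≤ D` are nonempty, for every center
  have hne : ∀ (u : V) (i : ℕ), i ≤ D → (G.distSphere u i).Nonempty := by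
    intro u i hi
    match i with
    | 0 => exact ⟨u, (mem_distSphere G).mpr SimpleGraph.dist_self⟩
    | (m + 1) =>
      by_contra hemp
      rw [Finset.not_nonempty_iff_eq_empty] at hemp
      have h0 : G.pbar u (m + 1) m 1 = 0 := by
        unfold SimpleGraph.pbar
        rw [hemp]
        simp
      have hpos : 0 < G.pbar x (m + 1) m 1 :=
        pbar_pos G hconn (distSphere_nonempty_of G hconn hxy hi)
      have := hdmr (m + 1) m 1 hi (by omega) (by omega) u x
      rw [h0] at this
      exact absurd this.symm (ne_of_gt hpos)
  -- step 2: induction on `i`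
  intro i
  induction i with
  | zero =>
    intro _ u u'
    have hsph : ∀ w : V, G.distSphere w 0 = {w} := by
      intro w
      ext v
      simp [mem_distSphere, hconn.dist_eq_zero_iff, eq_comm]
    rw [hsph u, hsph u']
    simp
  | succ m ih =>
    intro hm u u'
    have hm' : m ≤ D := by omega
    have hC : 0 < G.pbar u (m + 1) m 1 := pbar_pos G hconn (hne u (m + 1) hm)
    have hCeq : G.pbar u (m + 1) m 1 = G.pbar u' (m + 1) m 1 :=
      hdmr (m + 1) m 1 hm (by omega) (by omega) u u'
    have hBeq : G.pbar u m (m + 1) 1 = G.pbar u' m (m + 1) 1 :=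
      hdmr m (m + 1) 1 hm' hm (by omega) u u'
    have k1 := key_identity G u m (hne u m hm') (hne u (m + 1) hm)
    have k2 := key_identity G u' m (hne u' m hm') (hne u' (m + 1) hm)
    rw [ih hm' u u', hBeq] at k1
    rw [← k1, hCeq] at k2
    have hC' : 0 < G.pbar u' (m + 1) m 1 := hCeq ▸ hC
    have := mul_right_cancel₀ (ne_of_gt hC') k2
    exact_mod_cast this.symm
end

section
/- Let Γ be a distance mean-regular graph. Then for every vertex u and i ∈ {0,…,D}, ω_{ii}(u) = ā_i · k_i / 2 and ω_{i,i+1}(u) = k_i · b̄_i, where k_i = |Γ_i(u)|; in particular all ω_{ij}(u) are independent of u. -/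
open Finset

attribute [local instance] Classical.propDecidable

variable {V : Type*}

/-- `ω_{ij}(u)`: the number of edges with one endpoint at distance `i`
and the other at distance `j` from `u`. -/
noncomputable def SimpleGraph.omegaEdges [Fintype V] [DecidableEq V] (G : SimpleGraph V)
    [DecidableRel G.Adj] (u : V) (i j : ℕ) : ℕ :=
  (G.edgeFinset.filter fun e =>
    ∃ v w : V, e = s(v, w) ∧ G.dist u v = i ∧ G.dist u w = j).card

set_option linter.unusedSectionVars false

namespace SimpleGraph
variable [Fintype V] (G : SimpleGraph V) [DecidableRel G.Adj]

lemma mem_distSphere' {u v : V} {i : ℕ} : v ∈ G.distSphere u i ↔ G.dist u v = i := by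
  simp [distSphere]

lemma sphere_inter_eq' (u v : V) (j : ℕ) :
    G.distSphere u j ∩ G.distSphere v 1 = (G.distSphere u j).filter (fun w => G.Adj v w) := by
  ext w
  simp only [Finset.mem_inter, Finset.mem_filter, mem_distSphere', dist_eq_one_iff_adj]

lemma sum_card_eq_T' (u : V) (i j : ℕ) :
    ∑ v ∈ G.distSphere u i, (G.distSphere u j ∩ G.distSphere v 1).card
      = (((G.distSphere u i) ×ˢ (G.distSphere u j)).filter fun p => G.Adj p.1 p.2).card := by
  rw [Finset.card_filter, Finset.sum_product]
  refine Finset.sum_congr rfl fun v _ => ?_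
  rw [sphere_inter_eq', Finset.card_filter]

lemma T_card_eq_omega' [DecidableEq V] (u : V) (i j : ℕ) (hij : i ≠ j) :
    (((G.distSphere u i) ×ˢ (G.distSphere u j)).filter fun p => G.Adj p.1 p.2).card
      = G.omegaEdges u i j := by
  unfold omegaEdges
  apply Finset.card_bij (fun p _ => s(p.1, p.2))
  · rintro ⟨v, w⟩ hp
    simp only [Finset.mem_filter, Finset.mem_product, mem_distSphere'] at hp
    obtain ⟨⟨hv, hw⟩, hadj⟩ := hp
    simp only [Finset.mem_filter, mem_edgeFinset, mem_edgeSet]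
    exact ⟨hadj, v, w, rfl, hv, hw⟩
  · rintro ⟨v, w⟩ hp ⟨v', w'⟩ hp' heq
    simp only [Finset.mem_filter, Finset.mem_product, mem_distSphere'] at hp hp'
    rw [Sym2.eq_iff] at heq
    rcases heq with ⟨h1, h2⟩ | ⟨h1, h2⟩
    · exact Prod.ext h1 h2
    · exact absurd (by rw [← hp.1.1, show v = w' from h1, hp'.1.2]) hij
  · intro e he
    simp only [Finset.mem_filter, mem_edgeFinset] at he
    obtain ⟨hedge, v, w, rfl, hv, hw⟩ := he
    rw [mem_edgeSet] at hedge
    exact ⟨(v, w), by simp [Finset.mem_filter, Finset.mem_product, mem_distSphere', hv, hw, hedge], rfl⟩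

lemma T_card_eq_two_omega' [DecidableEq V] (u : V) (i : ℕ) :
    (((G.distSphere u i) ×ˢ (G.distSphere u i)).filter fun p => G.Adj p.1 p.2).card
      = 2 * G.omegaEdges u i i := by
  unfold omegaEdges
  set E := G.edgeFinset.filter fun e =>
      ∃ v w : V, e = s(v, w) ∧ G.dist u v = i ∧ G.dist u w = i with hE
  set T := ((G.distSphere u i) ×ˢ (G.distSphere u i)).filter fun p => G.Adj p.1 p.2 with hT
  have hmem : ∀ p ∈ T, s(p.1, p.2) ∈ E := by
    rintro ⟨v, w⟩ hp
    simp only [hT, Finset.mem_filter, Finset.mem_product, mem_distSphere'] at hp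
    obtain ⟨⟨hv, hw⟩, hadj⟩ := hp
    simp only [hE, Finset.mem_filter, mem_edgeFinset, mem_edgeSet]
    exact ⟨hadj, v, w, rfl, hv, hw⟩
  rw [Finset.card_eq_sum_card_fiberwise hmem]
  have hfib : ∀ e ∈ E, (T.filter fun p => s(p.1, p.2) = e).card = 2 := by
    intro e he
    simp only [hE, Finset.mem_filter, mem_edgeFinset] at he
    obtain ⟨hedge, v, w, rfl, hv, hw⟩ := he
    rw [mem_edgeSet] at hedge
    have hne : v ≠ w := hedge.ne
    have : (T.filter fun p => s(p.1, p.2) = s(v, w)) = {(v, w), (w, v)} := by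
      ext ⟨a, b⟩
      simp only [hT, Finset.mem_filter, Finset.mem_product, mem_distSphere',
        Finset.mem_insert, Finset.mem_singleton, Prod.mk.injEq, Sym2.eq_iff]
      constructor
      · rintro ⟨-, (⟨h1, h2⟩ | ⟨h1, h2⟩)⟩
        · exact Or.inl ⟨h1, h2⟩
        · exact Or.inr ⟨h1, h2⟩
      · rintro (⟨rfl, rfl⟩ | ⟨rfl, rfl⟩)
        · exact ⟨⟨⟨hv, hw⟩, hedge⟩, Or.inl ⟨rfl, rfl⟩⟩
        · exact ⟨⟨⟨hw, hv⟩, hedge.symm⟩, Or.inr ⟨rfl, rfl⟩⟩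
    rw [this, Finset.card_pair (by simp [hne])]
  rw [Finset.sum_congr rfl hfib, Finset.sum_const, smul_eq_mul, mul_comm]

lemma omega_symm' [DecidableEq V] (u : V) (i j : ℕ) : G.omegaEdges u i j = G.omegaEdges u j i := by
  unfold omegaEdges
  congr 1
  apply Finset.filter_congr
  intro e _
  constructor
  · rintro ⟨v, w, rfl, hv, hw⟩
    exact ⟨w, v, by rw [Sym2.eq_swap], hw, hv⟩
  · rintro ⟨v, w, rfl, hv, hw⟩
    exact ⟨w, v, by rw [Sym2.eq_swap], hw, hv⟩

lemma omega_far' [DecidableEq V] (hconn : G.Connected) (u : V) (i j : ℕ) (h : i + 1 < j) :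
    G.omegaEdges u i j = 0 := by
  unfold omegaEdges
  rw [Finset.card_eq_zero, Finset.filter_eq_empty_iff]
  rintro e he ⟨v, w, rfl, hv, hw⟩
  rw [mem_edgeFinset, mem_edgeSet] at he
  have h1 : G.dist v w = 1 := dist_eq_one_iff_adj.mpr he
  have htri := hconn.dist_triangle (u := u) (v := v) (w := w)
  omega

lemma omega_ii' [DecidableEq V] (u : V) (i : ℕ) :
    (G.omegaEdges u i i : ℚ) = G.abar u i * ((G.distSphere u i).card : ℚ) / 2 := by
  unfold abar pbar
  rw [← Nat.cast_sum, G.sum_card_eq_T' u i i, G.T_card_eq_two_omega' u i]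
  push_cast
  rcases eq_or_ne ((G.distSphere u i).card : ℚ) 0 with hk | hk
  · have hempty : G.distSphere u i = ∅ := Finset.card_eq_zero.mp (by exact_mod_cast hk)
    have h0 : (G.omegaEdges u i i : ℚ) = 0 := by
      have h2 : ((2 * G.omegaEdges u i i : ℕ) : ℚ) = ((0 : ℕ) : ℚ) := by
        rw [← G.T_card_eq_two_omega' u i, ← G.sum_card_eq_T' u i i, hempty, Finset.sum_empty]
      push_cast at h2
      linarith
    rw [h0, hk]
    ring
  · field_simp

lemma omega_succ' [DecidableEq V] (u : V) (i : ℕ) :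
    (G.omegaEdges u i (i + 1) : ℚ) = ((G.distSphere u i).card : ℚ) * G.bbar u i := by
  unfold bbar pbar
  rw [← Nat.cast_sum, G.sum_card_eq_T' u i (i + 1), G.T_card_eq_omega' u i (i + 1) (by omega)]
  rcases eq_or_ne ((G.distSphere u i).card : ℚ) 0 with hk | hk
  · have hempty : G.distSphere u i = ∅ := Finset.card_eq_zero.mp (by exact_mod_cast hk)
    have h0 : (G.omegaEdges u i (i + 1) : ℚ) = ((0 : ℕ) : ℚ) := by
      rw [← G.T_card_eq_omega' u i (i + 1) (by omega), ← G.sum_card_eq_T' u i (i + 1),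
        hempty, Finset.sum_empty]
    push_cast at h0
    rw [h0, hk]
    ring
  · field_simp

lemma pbar_zero' (hconn : G.Connected) (u : V) (i : ℕ) :
    G.pbar u 0 i i = ((G.distSphere u i).card : ℚ) := by
  have hzero : G.distSphere u 0 = {u} := by
    ext v
    simp [mem_distSphere', hconn.dist_eq_zero_iff, eq_comm]
  unfold pbar
  rw [hzero]
  simp

end SimpleGraph

/-- In a distance mean-regular graph, for every vertex `u` and `i ∈ {0,…,D}` one has
`ω_{ii}(u) = ā_i k_i / 2` and `ω_{i,i+1}(u) = k_i b̄_i`, where `k_i = |Γ_i(u)|`;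
in particular all the `ω_{ij}(u)` are independent of `u`. -/
theorem stmt8 [Fintype V] [DecidableEq V] (G : SimpleGraph V) [DecidableRel G.Adj]
    (hconn : G.Connected) (D : ℕ)
    (hd : ∀ x y : V, G.dist x y ≤ D) (hd' : ∃ x y : V, G.dist x y = D)
    (hdmr : G.DMR D) :
    (∀ (u : V) (i : ℕ), i ≤ D →
      ((G.omegaEdges u i i : ℚ) = G.abar u i * ((G.distSphere u i).card : ℚ) / 2 ∧
       (G.omegaEdges u i (i + 1) : ℚ) = ((G.distSphere u i).card : ℚ) * G.bbar u i)) ∧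
    (∀ i j : ℕ, i ≤ D → j ≤ D → ∀ u u' : V,
      G.omegaEdges u i j = G.omegaEdges u' i j) := by
  refine ⟨fun u i _ => ⟨G.omega_ii' u i, G.omega_succ' u i⟩, ?_⟩
  intro i j hi hj u u'
  by_cases hD : D = 0
  · -- no edges at all
    have hE : G.edgeFinset = ∅ := by
      rw [Finset.eq_empty_iff_forall_notMem]
      intro e he
      induction e with
      | _ v w =>
        rw [SimpleGraph.mem_edgeFinset, SimpleGraph.mem_edgeSet] at he
        have h1 : G.dist v w = 1 := SimpleGraph.dist_eq_one_iff_adj.mpr he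
        have h2 := hd v w
        omega
    unfold SimpleGraph.omegaEdges
    rw [hE, Finset.filter_empty, Finset.filter_empty]
  · have hD1 : 1 ≤ D := Nat.one_le_iff_ne_zero.mpr hD
    have hk : ∀ m : ℕ, m ≤ D → (G.distSphere u m).card = (G.distSphere u' m).card := by
      intro m hm
      have := hdmr 0 m m (Nat.zero_le D) hm hm u u'
      rw [G.pbar_zero' hconn u m, G.pbar_zero' hconn u' m] at this
      exact_mod_cast this
    have main1 : ∀ a : ℕ, a ≤ D → G.omegaEdges u a a = G.omegaEdges u' a a := by
      intro a ha
      have h1 := G.omega_ii' u a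
      have h2 := G.omega_ii' u' a
      have h3 : G.abar u a = G.abar u' a := hdmr a a 1 ha ha hD1 u u'
      have : (G.omegaEdges u a a : ℚ) = (G.omegaEdges u' a a : ℚ) := by
        rw [h1, h2, h3, hk a ha]
      exact_mod_cast this
    have main2 : ∀ a : ℕ, a ≤ D → a + 1 ≤ D →
        G.omegaEdges u a (a + 1) = G.omegaEdges u' a (a + 1) := by
      intro a ha hb
      have h1 := G.omega_succ' u a
      have h2 := G.omega_succ' u' a
      have h3 : G.bbar u a = G.bbar u' a := hdmr a (a + 1) 1 ha hb hD1 u u'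
      have : (G.omegaEdges u a (a + 1) : ℚ) = (G.omegaEdges u' a (a + 1) : ℚ) := by
        rw [h1, h2, h3, hk a ha]
      exact_mod_cast this
    rcases Nat.lt_trichotomy i j with hlt | heq | hgt
    · rcases eq_or_lt_of_le (Nat.succ_le_of_lt hlt) with heq1 | hfar
      · subst heq1
        exact main2 i hi hj
      · rw [G.omega_far' hconn u i j hfar, G.omega_far' hconn u' i j hfar]
    · subst heq
      exact main1 i hi
    · rw [G.omega_symm' u i j, G.omega_symm' u' i j]
      rcases eq_or_lt_of_le (Nat.succ_le_of_lt hgt) with heq1 | hfar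
      · subst heq1
        exact main2 j hj hi
      · rw [G.omega_far' hconn u j i hfar, G.omega_far' hconn u' j i hfar]
end

section
/- A finite connected graph Γ with diameter D is distance mean-regular if and only if for all h,i,j ∈ {0,…,D} the triple-count t_{hij}(u) = |{(v,w) : dist(u,v)=h, dist(u,w)=i, dist(v,w)=j}| is independent of the vertex u. -/
open Finset

attribute [local instance] Classical.propDecidable

variable {V : Type*}

/-- `t_{hij}(u)`: the number of pairs `(v,w)` with `dist(u,v) = h`, `dist(u,w) = i`
and `dist(v,w) = j`. -/
noncomputable def SimpleGraph.tnum [Fintype V] (G : SimpleGraph V) (u : V) (h i j : ℕ) : ℕ :=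
  (Finset.univ.filter fun p : V × V =>
    G.dist u p.1 = h ∧ G.dist u p.2 = i ∧ G.dist p.1 p.2 = j).card

lemma tnum_eq_sum [Fintype V] (G : SimpleGraph V) (u : V) (h i j : ℕ) :
    G.tnum u h i j = ∑ v ∈ G.distSphere u h, (G.distSphere u i ∩ G.distSphere v j).card := by
  classical
  unfold SimpleGraph.tnum SimpleGraph.distSphere
  rw [Finset.card_filter, Fintype.sum_prod_type, Finset.sum_filter]
  refine Finset.sum_congr rfl fun v _ => ?_
  by_cases hv : G.dist u v = h
  · simp only [hv, true_and, if_true, ← Finset.filter_and, Finset.card_filter]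
  · simp [hv]

lemma sphere_zero [Fintype V] (G : SimpleGraph V) (hconn : G.Connected) (u : V) :
    G.distSphere u 0 = {u} := by
  classical
  ext v
  simp only [SimpleGraph.distSphere, Finset.mem_filter, Finset.mem_univ, true_and,
    Finset.mem_singleton, SimpleGraph.dist_eq_zero_iff_eq_or_not_reachable]
  simp [hconn.preconnected u v, eq_comm]

lemma pbar_zero [Fintype V] (G : SimpleGraph V) (hconn : G.Connected) (u : V) (i : ℕ) :
    G.pbar u 0 i i = ((G.distSphere u i).card : ℚ) := by
  classical
  rw [SimpleGraph.pbar, sphere_zero G hconn]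
  simp

lemma tnum_zero [Fintype V] (G : SimpleGraph V) (hconn : G.Connected) (u : V) (i : ℕ) :
    G.tnum u 0 i i = (G.distSphere u i).card := by
  classical
  rw [tnum_eq_sum, sphere_zero G hconn]
  simp

lemma pbar_eq_div [Fintype V] (G : SimpleGraph V) (u : V) (h i j : ℕ) :
    G.pbar u h i j = (G.tnum u h i j : ℚ) / ((G.distSphere u h).card : ℚ) := by
  rw [SimpleGraph.pbar, tnum_eq_sum]
  push_cast
  ring


/-- A finite connected graph of diameter `D` is distance mean-regular if and only if
the triple-counts `t_{hij}(u)` are independent of `u` for all `h,i,j = 0,…,D`. -/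
theorem stmt11 [Fintype V] (G : SimpleGraph V) (hconn : G.Connected) (D : ℕ)
    (hd : ∀ x y : V, G.dist x y ≤ D) (hd' : ∃ x y : V, G.dist x y = D) :
    G.DMR D ↔
      ∀ h i j : ℕ, h ≤ D → i ≤ D → j ≤ D → ∀ u u' : V,
        G.tnum u h i j = G.tnum u' h i j := by
  constructor
  · intro hdmr h i j hh hi hj u u'
    have hcard : (G.distSphere u h).card = (G.distSphere u' h).card := by
      have := hdmr 0 h h (Nat.zero_le _) hh hh u u'
      rw [pbar_zero G hconn, pbar_zero G hconn] at this
      exact_mod_cast this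
    by_cases hz : (G.distSphere u h).card = 0
    · have hz' : (G.distSphere u' h).card = 0 := hcard ▸ hz
      rw [tnum_eq_sum, tnum_eq_sum, Finset.card_eq_zero.mp hz, Finset.card_eq_zero.mp hz']
      simp
    · have hp := hdmr h i j hh hi hj u u'
      rw [pbar_eq_div, pbar_eq_div] at hp
      have : (G.tnum u h i j : ℚ) = (G.tnum u' h i j : ℚ) := by
        rw [← hcard] at hp
        have hq : ((G.distSphere u h).card : ℚ) ≠ 0 := Nat.cast_ne_zero.mpr hz
        field_simp at hp
        exact_mod_cast hp
      exact_mod_cast this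
  · intro ht h i j hh hi hj u u'
    have hcard : (G.distSphere u h).card = (G.distSphere u' h).card := by
      rw [← tnum_zero G hconn, ← tnum_zero G hconn]
      exact ht 0 h h (Nat.zero_le _) hh hh u u'
    rw [pbar_eq_div, pbar_eq_div, ht h i j hh hi hj u u', hcard]
end

section
/- A finite connected graph Γ with diameter D is distance mean-regular if and only if for all h,i,j ∈ {0,…,D} the matrix (A_i A_j) ∘ A_h (Hadamard product) has the all-ones vector as both a right and a left eigenvector; in that case the corresponding eigenvalue equals k_h · p̄_{ij}^h. -/
open Finset

attribute [local instance] Classical.propDecidable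

variable {V : Type*}

/-- The distance-`i` matrix of `Γ`: the 0/1 matrix with `(u,v)`-entry `1` iff
`dist(u,v) = i`. -/
noncomputable def SimpleGraph.distMatrix [Fintype V] (G : SimpleGraph V) (i : ℕ) :
    Matrix V V ℚ :=
  Matrix.of fun u v => if G.dist u v = i then (1 : ℚ) else 0

lemma sum_inter [Fintype V] (G : SimpleGraph V) (u : V) (h i j : ℕ) :
    (∑ v ∈ G.distSphere u h, ((G.distSphere u i ∩ G.distSphere v j).card : ℚ)) =
      ((G.distSphere u h).card : ℚ) * G.pbar u h i j := by
  unfold SimpleGraph.pbar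
  rcases eq_or_ne (G.distSphere u h).card 0 with hc | hc
  · rw [Finset.card_eq_zero] at hc; simp [hc]
  · field_simp

lemma entry [Fintype V] (G : SimpleGraph V) (h i j : ℕ) (u v : V) :
    (Matrix.hadamard (G.distMatrix i * G.distMatrix j) (G.distMatrix h)) u v =
      if G.dist u v = h then ((G.distSphere u i ∩ G.distSphere v j).card : ℚ) else 0 := by
  simp only [Matrix.hadamard_apply, Matrix.mul_apply, SimpleGraph.distMatrix, Matrix.of_apply]
  rw [mul_ite, mul_one, mul_zero]
  by_cases hh : G.dist u v = h
  · simp only [hh, if_true]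
    have hs : G.distSphere u i ∩ G.distSphere v j =
        Finset.univ.filter (fun w => G.dist u w = i ∧ G.dist w v = j) := by
      ext w
      have hc := SimpleGraph.dist_comm (G := G) (u := v) (v := w)
      simp [SimpleGraph.distSphere, Finset.mem_filter, Finset.mem_inter, hc]
    rw [hs, Finset.card_filter]
    push_cast
    apply Finset.sum_congr rfl
    intro w _
    by_cases h1 : G.dist u w = i <;> by_cases h2 : G.dist w v = j <;> simp [h1, h2]
  · simp [hh]

lemma rowSum [Fintype V] (G : SimpleGraph V) (h i j : ℕ) (u : V) :
    (∑ v, (Matrix.hadamard (G.distMatrix i * G.distMatrix j) (G.distMatrix h)) u v) =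
      ((G.distSphere u h).card : ℚ) * G.pbar u h i j := by
  rw [← sum_inter]
  simp_rw [entry]
  rw [← Finset.sum_filter]
  rfl

lemma colSum [Fintype V] (G : SimpleGraph V) (h i j : ℕ) (v : V) :
    (∑ u, (Matrix.hadamard (G.distMatrix i * G.distMatrix j) (G.distMatrix h)) u v) =
      ((G.distSphere v h).card : ℚ) * G.pbar v h j i := by
  rw [← sum_inter]
  simp_rw [entry]
  rw [← Finset.sum_filter]
  have hset : Finset.univ.filter (fun u => G.dist u v = h) = G.distSphere v h := by
    ext u
    have hc := SimpleGraph.dist_comm (G := G) (u := u) (v := v)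
    simp [SimpleGraph.distSphere, hc]
  rw [hset]
  exact Finset.sum_congr rfl fun u _ => by rw [Finset.inter_comm]

/-- A finite connected graph of diameter `D` is distance mean-regular iff, for all
`h,i,j ∈ {0,…,D}`, the Hadamard product `(A_i A_j) ∘ A_h` has the all-ones vector as
both a right and a left eigenvector; in that case the corresponding eigenvalue is
`k_h · p̄_{ij}^h`. -/
theorem stmt15 [Fintype V] (G : SimpleGraph V) (hconn : G.Connected) (D : ℕ)
    (hd : ∀ x y : V, G.dist x y ≤ D) (hd' : ∃ x y : V, G.dist x y = D) :
    (G.DMR D ↔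
      ∀ h i j : ℕ, h ≤ D → i ≤ D → j ≤ D → ∃ θ : ℚ,
        (Matrix.hadamard (G.distMatrix i * G.distMatrix j) (G.distMatrix h)).mulVec
            (1 : V → ℚ) = θ • (1 : V → ℚ) ∧
        Matrix.vecMul (1 : V → ℚ)
            (Matrix.hadamard (G.distMatrix i * G.distMatrix j) (G.distMatrix h)) =
          θ • (1 : V → ℚ)) ∧
    (G.DMR D → ∀ h i j : ℕ, h ≤ D → i ≤ D → j ≤ D → ∀ u : V,
      (Matrix.hadamard (G.distMatrix i * G.distMatrix j) (G.distMatrix h)).mulVec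
          (1 : V → ℚ) =
        (((G.distSphere u h).card : ℚ) * G.pbar u h i j) • (1 : V → ℚ) ∧
      Matrix.vecMul (1 : V → ℚ)
          (Matrix.hadamard (G.distMatrix i * G.distMatrix j) (G.distMatrix h)) =
        (((G.distSphere u h).card : ℚ) * G.pbar u h i j) • (1 : V → ℚ)) := by
  classical
  have hne : Nonempty V := hconn.nonempty
  have hcardV : ((Fintype.card V : ℚ)) ≠ 0 := by
    exact_mod_cast Fintype.card_ne_zero
  -- abbreviations
  have hmul : ∀ h i j : ℕ, ∀ w : V,
      (Matrix.hadamard (G.distMatrix i * G.distMatrix j) (G.distMatrix h)).mulVec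
        (1 : V → ℚ) w =
      ∑ v, (Matrix.hadamard (G.distMatrix i * G.distMatrix j) (G.distMatrix h)) w v := by
    intro h i j w
    simp [Matrix.mulVec, dotProduct]
  have hvm : ∀ h i j : ℕ, ∀ w : V,
      Matrix.vecMul (1 : V → ℚ)
        (Matrix.hadamard (G.distMatrix i * G.distMatrix j) (G.distMatrix h)) w =
      ∑ v, (Matrix.hadamard (G.distMatrix i * G.distMatrix j) (G.distMatrix h)) v w := by
    intro h i j w
    simp [Matrix.vecMul, dotProduct]
  -- k_h is constant under DMR
  have kconst : G.DMR D → ∀ m : ℕ, m ≤ D → ∀ u u' : V,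
      ((G.distSphere u m).card : ℚ) = ((G.distSphere u' m).card : ℚ) := by
    intro hdmr m hm u u'
    rw [← pbar_zero G hconn, ← pbar_zero G hconn]
    exact hdmr 0 m m (Nat.zero_le D) hm hm u u'
  -- main forward lemma
  have main : G.DMR D → ∀ h i j : ℕ, h ≤ D → i ≤ D → j ≤ D → ∀ u : V,
      (Matrix.hadamard (G.distMatrix i * G.distMatrix j) (G.distMatrix h)).mulVec
          (1 : V → ℚ) =
        (((G.distSphere u h).card : ℚ) * G.pbar u h i j) • (1 : V → ℚ) ∧
      Matrix.vecMul (1 : V → ℚ)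
          (Matrix.hadamard (G.distMatrix i * G.distMatrix j) (G.distMatrix h)) =
        (((G.distSphere u h).card : ℚ) * G.pbar u h i j) • (1 : V → ℚ) := by
    intro hdmr h i j hh hi hj u
    set c1 : ℚ := ((G.distSphere u h).card : ℚ) * G.pbar u h i j with hc1
    set c2 : ℚ := ((G.distSphere u h).card : ℚ) * G.pbar u h j i with hc2
    have e1 : ∀ w : V,
        (∑ v, (Matrix.hadamard (G.distMatrix i * G.distMatrix j) (G.distMatrix h)) w v) = c1 := by
      intro w
      rw [rowSum, kconst hdmr h hh w u, hdmr h i j hh hi hj w u]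
    have e2 : ∀ w : V,
        (∑ v, (Matrix.hadamard (G.distMatrix i * G.distMatrix j) (G.distMatrix h)) v w) = c2 := by
      intro w
      rw [colSum, kconst hdmr h hh w u, hdmr h j i hh hj hi w u]
    have hcc : c1 = c2 := by
      have t1 : (∑ w : V, ∑ v : V,
          (Matrix.hadamard (G.distMatrix i * G.distMatrix j) (G.distMatrix h)) w v)
          = (Fintype.card V : ℚ) * c1 := by
        rw [Finset.sum_congr rfl fun w _ => e1 w, Finset.sum_const, Finset.card_univ,
          nsmul_eq_mul]
      have t2 : (∑ w : V, ∑ v : V,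
          (Matrix.hadamard (G.distMatrix i * G.distMatrix j) (G.distMatrix h)) w v)
          = (Fintype.card V : ℚ) * c2 := by
        rw [show (∑ w : V, ∑ v : V,
            (Matrix.hadamard (G.distMatrix i * G.distMatrix j) (G.distMatrix h)) w v) =
            ∑ v : V, ∑ w : V,
            (Matrix.hadamard (G.distMatrix i * G.distMatrix j) (G.distMatrix h)) w v from
            Finset.sum_comm, Finset.sum_congr rfl fun w _ => e2 w, Finset.sum_const,
          Finset.card_univ, nsmul_eq_mul]
      exact mul_left_cancel₀ hcardV (t1.symm.trans t2)
    constructor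
    · funext w
      rw [hmul, e1 w]
      simp
    · funext w
      rw [hvm, e2 w, ← hcc]
      simp
  refine ⟨⟨fun hdmr h i j hh hi hj => ?_, fun heig h i j hh hi hj u u' => ?_⟩,
    fun hdmr h i j hh hi hj u => main hdmr h i j hh hi hj u⟩
  · obtain ⟨u0⟩ := hne
    exact ⟨((G.distSphere u0 h).card : ℚ) * G.pbar u0 h i j, main hdmr h i j hh hi hj u0⟩
  · -- converse
    obtain ⟨θ, hrow, -⟩ := heig h i j hh hi hj
    have hr : ∀ w : V, ((G.distSphere w h).card : ℚ) * G.pbar w h i j = θ := by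
      intro w
      have := congrFun hrow w
      rw [hmul, rowSum] at this
      simpa using this
    obtain ⟨θ0, hrow0, -⟩ := heig 0 h h (Nat.zero_le D) hh hh
    have hk : ∀ w : V, ((G.distSphere w h).card : ℚ) = θ0 := by
      intro w
      have := congrFun hrow0 w
      rw [hmul, rowSum, pbar_zero G hconn, sphere_zero G hconn] at this
      simpa using this
    rcases eq_or_ne θ0 0 with h0 | h0
    · have hz : ∀ w : V, G.pbar w h i j = 0 := by
        intro w
        have : ((G.distSphere w h).card : ℚ) = 0 := by rw [hk w, h0]
        have hcz : (G.distSphere w h).card = 0 := by exact_mod_cast this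
        rw [Finset.card_eq_zero] at hcz
        simp [SimpleGraph.pbar, hcz]
      rw [hz u, hz u']
    · have hp : ∀ w : V, G.pbar w h i j = θ / θ0 := by
        intro w
        have := hr w
        rw [hk w] at this
        field_simp at this ⊢
        linarith [this]
      rw [hp u, hp u']
end
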